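/- In the local-coordinate Lorentzian setting, assume u is a GRW field on U with torse-forming scalar φ and Ricci eigenvalue ξ. Then ∂_i ξ + u_i ξ̇ = 0 on U. -/

import Mathlib

noncomputable section
open scoped BigOperators

namespace GRWPaper

/-- Points of the local chart `U ⊆ ℝⁿ`. -/
abbrev Pt (n : ℕ) := Fin n → ℝ

variable {n : ℕ}

/-- Partial derivative `∂_i f` at `x`. -/
def pd (f : Pt n → ℝ) (i : Fin n) (x : Pt n) : ℝ :=
  fderiv ℝ f x (Pi.single i 1)

/-- `Ṡ = u^m ∂_m S`. -/
def udot (u : Pt n → Fin n → ℝ) (S : Pt n → ℝ) (x : Pt n) : ℝ :=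
  ∑ m, u x m * pd S m x

/-- Lowered components `u_k = g_{kj} u^j`. -/
def low (g : Pt n → Matrix (Fin n) (Fin n) ℝ) (u : Pt n → Fin n → ℝ)
    (x : Pt n) (k : Fin n) : ℝ :=
  ∑ j, g x k j * u x j

/-- Christoffel symbols `Γ^m_{ij} = ½ g^{ml}(∂_i g_{jl} + ∂_j g_{il} − ∂_l g_{ij})`. -/
def Chr (g ginv : Pt n → Matrix (Fin n) (Fin n) ℝ) (m i j : Fin n) (x : Pt n) : ℝ :=
  (1/2) * ∑ l, ginv x m l *
    (pd (fun y => g y j l) i x + pd (fun y => g y i l) j x - pd (fun y => g y i j) l x)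

/-- Covariant derivative of a covector field: `∇_k w_l = ∂_k w_l − Γ^m_{kl} w_m`. -/
def covdCo (g ginv : Pt n → Matrix (Fin n) (Fin n) ℝ) (w : Pt n → Fin n → ℝ)
    (k l : Fin n) (x : Pt n) : ℝ :=
  pd (fun y => w y l) k x - ∑ m, Chr g ginv m k l x * w x m

/-- Covariant Hessian of a scalar: `∇_k∇_l S = ∂_k∂_l S − Γ^m_{kl} ∂_m S`. -/
def hess (g ginv : Pt n → Matrix (Fin n) (Fin n) ℝ) (S : Pt n → ℝ)
    (k l : Fin n) (x : Pt n) : ℝ :=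
  pd (fun y => pd S l y) k x - ∑ m, Chr g ginv m k l x * pd S m x

/-- Riemann tensor `R_{jkl}{}^m`, normalized so that
`∇_j∇_k w_l − ∇_k∇_j w_l = R_{jkl}{}^m w_m` for all covector fields `w`. -/
def Riem (g ginv : Pt n → Matrix (Fin n) (Fin n) ℝ) (j k l m : Fin n) (x : Pt n) : ℝ :=
  pd (fun y => Chr g ginv m j l y) k x - pd (fun y => Chr g ginv m k l y) j x
    + ∑ a, Chr g ginv a j l x * Chr g ginv m k a x
    - ∑ a, Chr g ginv a k l x * Chr g ginv m j a x

/-- Ricci tensor `R_{kl} = R_{jkl}{}^j`. -/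
def RicT (g ginv : Pt n → Matrix (Fin n) (Fin n) ℝ) (k l : Fin n) (x : Pt n) : ℝ :=
  ∑ j, Riem g ginv j k l j x

/-- Scalar curvature `R = g^{kl} R_{kl}`. -/
def ScalC (g ginv : Pt n → Matrix (Fin n) (Fin n) ℝ) (x : Pt n) : ℝ :=
  ∑ k, ∑ l, ginv x k l * RicT g ginv k l x

/-- `R_j{}^m = g^{ma} R_{ja}`. -/
def RicUp (g ginv : Pt n → Matrix (Fin n) (Fin n) ℝ) (j m : Fin n) (x : Pt n) : ℝ :=
  ∑ a, ginv x m a * RicT g ginv j a x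

/-- Weyl tensor `C_{jkl}{}^m`. -/
def Weyl (g ginv : Pt n → Matrix (Fin n) (Fin n) ℝ) (j k l m : Fin n) (x : Pt n) : ℝ :=
  Riem g ginv j k l m x
    + ((if j = m then RicT g ginv k l x else 0) - (if k = m then RicT g ginv j l x else 0)
        + RicUp g ginv j m x * g x k l - RicUp g ginv k m x * g x j l) / ((n : ℝ) - 2)
    - ScalC g ginv x * ((if j = m then g x k l else 0) - (if k = m then g x j l else 0))
        / (((n : ℝ) - 1) * ((n : ℝ) - 2))

/-- Covariant divergence `∇_m C_{jkl}{}^m` of the Weyl tensor. -/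
def divWeyl (g ginv : Pt n → Matrix (Fin n) (Fin n) ℝ) (j k l : Fin n) (x : Pt n) : ℝ :=
  ∑ m, (pd (fun y => Weyl g ginv j k l m y) m x
    - ∑ a, Chr g ginv a m j x * Weyl g ginv a k l m x
    - ∑ a, Chr g ginv a m k x * Weyl g ginv j a l m x
    - ∑ a, Chr g ginv a m l x * Weyl g ginv j k a m x
    + ∑ a, Chr g ginv m m a x * Weyl g ginv j k l a x)

/-- Covariant derivative of a (0,2) tensor: `∇_i T_{kl}`. -/
def covd2T (g ginv : Pt n → Matrix (Fin n) (Fin n) ℝ) (T : Pt n → Fin n → Fin n → ℝ)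
    (i k l : Fin n) (x : Pt n) : ℝ :=
  pd (fun y => T y k l) i x - ∑ a, Chr g ginv a i k x * T x a l
    - ∑ a, Chr g ginv a i l x * T x k a

/-- Covariant derivative of a (0,3) tensor: `∇_i T_{jkl}`. -/
def covd3T (g ginv : Pt n → Matrix (Fin n) (Fin n) ℝ)
    (T : Pt n → Fin n → Fin n → Fin n → ℝ) (i j k l : Fin n) (x : Pt n) : ℝ :=
  pd (fun y => T y j k l) i x - ∑ a, Chr g ginv a i j x * T x a k l
    - ∑ a, Chr g ginv a i k x * T x j a l - ∑ a, Chr g ginv a i l x * T x j k a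

/-- Second covariant derivative of a (0,2) tensor: `∇_i∇_j T_{kl}`. -/
def covdcovdT (g ginv : Pt n → Matrix (Fin n) (Fin n) ℝ) (T : Pt n → Fin n → Fin n → ℝ)
    (i j k l : Fin n) (x : Pt n) : ℝ :=
  covd3T g ginv (fun y a b c => covd2T g ginv T a b c y) i j k l x

/-- Covariant Laplacian of a (0,2) tensor: `g^{ab} ∇_a∇_b T_{kl}`. -/
def lap2T (g ginv : Pt n → Matrix (Fin n) (Fin n) ℝ) (T : Pt n → Fin n → Fin n → ℝ)
    (k l : Fin n) (x : Pt n) : ℝ :=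
  ∑ a, ∑ b, ginv x a b * covdcovdT g ginv T a b k l x

/-- All-lowered Riemann tensor `R_{jklm} = R_{jkl}{}^p g_{pm}`. -/
def RiemLow (g ginv : Pt n → Matrix (Fin n) (Fin n) ℝ) (j k l m : Fin n) (x : Pt n) : ℝ :=
  ∑ p, Riem g ginv j k l p x * g x p m

section Aux
variable {U : Set (Pt n)} {x : Pt n}

lemma pd_congr {f h : Pt n → ℝ} (hU : IsOpen U) (hx : x ∈ U)
    (hfh : ∀ y ∈ U, f y = h y) (i : Fin n) : pd f i x = pd h i x := by
  unfold pd
  rw [Filter.EventuallyEq.fderiv_eq (by filter_upwards [hU.mem_nhds hx] with y hy using hfh y hy)]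

lemma diffAt {f : Pt n → ℝ} (hU : IsOpen U) (hf : ContDiffOn ℝ (⊤ : ℕ∞) f U) (hx : x ∈ U) :
    DifferentiableAt ℝ f x :=
  (hf.contDiffAt (hU.mem_nhds hx)).differentiableAt (by simp)

lemma pd_add {f h : Pt n → ℝ} (hf : DifferentiableAt ℝ f x) (hh : DifferentiableAt ℝ h x) (i : Fin n) :
    pd (fun y => f y + h y) i x = pd f i x + pd h i x := by
  unfold pd; rw [fderiv_fun_add hf hh]; rfl

lemma pd_sub {f h : Pt n → ℝ} (hf : DifferentiableAt ℝ f x) (hh : DifferentiableAt ℝ h x) (i : Fin n) :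
    pd (fun y => f y - h y) i x = pd f i x - pd h i x := by
  unfold pd; rw [fderiv_fun_sub hf hh]; rfl

lemma pd_mul {f h : Pt n → ℝ} (hf : DifferentiableAt ℝ f x) (hh : DifferentiableAt ℝ h x) (i : Fin n) :
    pd (fun y => f y * h y) i x = f x * pd h i x + h x * pd f i x := by
  unfold pd; rw [fderiv_fun_mul hf hh]; simp

lemma pd_const_mul {f : Pt n → ℝ} (hf : DifferentiableAt ℝ f x) (c : ℝ) (i : Fin n) :
    pd (fun y => c * f y) i x = c * pd f i x := by
  unfold pd; rw [fderiv_const_mul hf]; simp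

lemma pd_sum {ι : Type*} [Fintype ι] {f : ι → Pt n → ℝ}
    (hf : ∀ j, DifferentiableAt ℝ (f j) x) (i : Fin n) :
    pd (fun y => ∑ j, f j y) i x = ∑ j, pd (f j) i x := by
  unfold pd; rw [fderiv_fun_sum (fun j _ => hf j)]; simp

lemma contDiffOn_pd {f : Pt n → ℝ} (hU : IsOpen U) (hf : ContDiffOn ℝ (⊤ : ℕ∞) f U) (i : Fin n) :
    ContDiffOn ℝ (⊤ : ℕ∞) (fun y => pd f i y) U := by
  have h1 : ContDiffOn ℝ (⊤ : ℕ∞) (fun y => fderivWithin ℝ f U y) U :=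
    hf.fderivWithin hU.uniqueDiffOn (by simp)
  exact (h1.clm_apply contDiffOn_const).congr fun y hy => by
    rw [pd, fderivWithin_of_isOpen hU hy]

lemma pd_comm {f : Pt n → ℝ} (hU : IsOpen U) (hf : ContDiffOn ℝ (⊤ : ℕ∞) f U) (hx : x ∈ U) (i l : Fin n) :
    pd (fun y => pd f l y) i x = pd (fun y => pd f i y) l x := by
  have hca : ContDiffAt ℝ (⊤ : ℕ∞) f x := hf.contDiffAt (hU.mem_nhds hx)
  have hsym : IsSymmSndFDerivAt ℝ f x := hca.isSymmSndFDerivAt (by rw [minSmoothness_of_isRCLikeNormedField]; exact WithTop.coe_le_coe.mpr le_top)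
  have hd : DifferentiableAt ℝ (fderiv ℝ f) x :=
    (hca.fderiv_right (m := 1) ((by exact WithTop.coe_le_coe.mpr le_top))).differentiableAt one_ne_zero
  have key : ∀ a b : Fin n, pd (fun y => pd f b y) a x
      = fderiv ℝ (fderiv ℝ f) x (Pi.single a 1) (Pi.single b 1) := by
    intro a b
    show fderiv ℝ (fun y => (fderiv ℝ f y) (Pi.single b 1)) x (Pi.single a 1) = _
    rw [fderiv_clm_apply hd (differentiableAt_const _)]
    simp
  rw [key, key, hsym]
end Aux
structure Setting (n : ℕ) where
  hn : 3 ≤ n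
  U : Set (Pt n)
  hU : IsOpen U
  g : Pt n → Matrix (Fin n) (Fin n) ℝ
  ginv : Pt n → Matrix (Fin n) (Fin n) ℝ
  hg_smooth : ∀ i j : Fin n, ContDiffOn ℝ (⊤ : ℕ∞) (fun x => g x i j) U
  hginv_smooth : ∀ i j : Fin n, ContDiffOn ℝ (⊤ : ℕ∞) (fun x => ginv x i j) U
  hg_symm : ∀ x ∈ U, ∀ i j : Fin n, g x i j = g x j i
  hginv : ∀ x ∈ U, g x * ginv x = 1
  u : Pt n → Fin n → ℝ
  hu_smooth : ∀ i : Fin n, ContDiffOn ℝ (⊤ : ℕ∞) (fun x => u x i) U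
  hu_unit : ∀ x ∈ U, ∑ i, ∑ j, g x i j * u x i * u x j = -1
  φ : Pt n → ℝ
  hφ_smooth : ContDiffOn ℝ (⊤ : ℕ∞) φ U
  htf : ∀ x ∈ U, ∀ k l : Fin n, covdCo g ginv (low g u) k l x
      = φ x * (g x k l + low g u x k * low g u x l)
  ξ : Pt n → ℝ
  hξ_smooth : ContDiffOn ℝ (⊤ : ℕ∞) ξ U
  heig : ∀ x ∈ U, ∀ k : Fin n, ∑ l, RicT g ginv k l x * u x l = ξ x * low g u x k
namespace Setting
open Matrix
variable {S : Setting n} {x : Pt n}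

lemma sum_g_ginv (hx : x ∈ S.U) (i j : Fin n) :
    ∑ a, S.g x i a * S.ginv x a j = if i = j then 1 else 0 := by
  have h : (S.g x * S.ginv x) i j = (1 : Matrix (Fin n) (Fin n) ℝ) i j := by
    rw [S.hginv x hx]
  rw [Matrix.mul_apply] at h
  rw [h, Matrix.one_apply]

lemma sum_ginv_g (hx : x ∈ S.U) (i j : Fin n) :
    ∑ a, S.ginv x i a * S.g x a j = if i = j then 1 else 0 := by
  have h : (S.ginv x * S.g x) i j = (1 : Matrix (Fin n) (Fin n) ℝ) i j := by
    rw [mul_eq_one_comm.mp (S.hginv x hx)]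
  rw [Matrix.mul_apply] at h
  rw [h, Matrix.one_apply]

lemma ginv_symm (hx : x ∈ S.U) (i j : Fin n) : S.ginv x i j = S.ginv x j i := by
  have hgt : (S.g x)ᵀ = S.g x := Matrix.ext fun a b => S.hg_symm x hx b a
  have h2 : S.ginv x = (S.g x)⁻¹ := (Matrix.inv_eq_right_inv (S.hginv x hx)).symm
  have h3 : (S.ginv x)ᵀ = S.ginv x := by
    rw [h2, Matrix.transpose_nonsing_inv, hgt]
  conv_rhs => rw [← h3]
  rfl

lemma sm_low (k : Fin n) : ContDiffOn ℝ (⊤ : ℕ∞) (fun y => low S.g S.u y k) S.U := by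
  unfold low
  exact ContDiffOn.sum fun j _ => (S.hg_smooth k j).mul (S.hu_smooth j)

lemma sm_pdg (i j k : Fin n) : ContDiffOn ℝ (⊤ : ℕ∞) (fun y => pd (fun z => S.g z i j) k y) S.U :=
  contDiffOn_pd S.hU (S.hg_smooth i j) k

lemma sm_chr (m i j : Fin n) : ContDiffOn ℝ (⊤ : ℕ∞) (fun y => Chr S.g S.ginv m i j y) S.U := by
  unfold Chr
  exact contDiffOn_const.mul <| ContDiffOn.sum fun l _ =>
    (S.hginv_smooth m l).mul (((S.sm_pdg j l i).add (S.sm_pdg i l j)).sub (S.sm_pdg i j l))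

end Setting

def Setting.Gbar (S : Setting n) (i j m : Fin n) (x : Pt n) : ℝ :=
  (1/2) * (pd (fun y => S.g y j m) i x + pd (fun y => S.g y i m) j x
    - pd (fun y => S.g y i j) m x)

namespace Setting
variable {S : Setting n} {x : Pt n}

lemma pdg_symm (hx : x ∈ S.U) (i k l : Fin n) :
    pd (fun y => S.g y k l) i x = pd (fun y => S.g y l k) i x :=
  pd_congr S.hU hx (fun y hy => S.hg_symm y hy k l) i

lemma chr_symm (hx : x ∈ S.U) (m i j : Fin n) :
    Chr S.g S.ginv m i j x = Chr S.g S.ginv m j i x := by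
  unfold Chr
  congr 1
  apply Finset.sum_congr rfl
  intro l _
  rw [pdg_symm hx l i j]
  ring

lemma chr_low (hx : x ∈ S.U) (i j m : Fin n) :
    ∑ p, Chr S.g S.ginv p i j x * S.g x p m = S.Gbar i j m x := by
  unfold Chr Gbar
  set B : Fin n → ℝ := fun l => pd (fun y => S.g y j l) i x + pd (fun y => S.g y i l) j x
    - pd (fun y => S.g y i j) l x with hB
  have h1 : ∀ l, ∑ p, S.g x p m * S.ginv x p l = if m = l then 1 else 0 := by
    intro l
    rw [← sum_g_ginv hx m l]
    exact Finset.sum_congr rfl fun p _ => by rw [S.hg_symm x hx p m]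
  have h2 : ∀ p, ((1/2) * ∑ l, S.ginv x p l * B l) * S.g x p m
      = ∑ l, (1/2) * ((S.g x p m * S.ginv x p l) * B l) := by
    intro p
    rw [Finset.mul_sum, Finset.sum_mul]
    apply Finset.sum_congr rfl
    intro l _
    ring
  rw [Finset.sum_congr rfl fun p _ => h2 p, Finset.sum_comm]
  have h3 : ∀ l, ∑ p, (1/2) * ((S.g x p m * S.ginv x p l) * B l)
      = (1/2) * ((if m = l then 1 else 0) * B l) := by
    intro l
    rw [← h1 l, Finset.sum_mul, Finset.mul_sum]
    try exact Finset.sum_congr rfl fun p _ => by ring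
  rw [Finset.sum_congr rfl fun l _ => h3 l]
  simp [hB]

lemma dg_eq (hx : x ∈ S.U) (i k l : Fin n) :
    pd (fun y => S.g y k l) i x = S.Gbar i k l x + S.Gbar i l k x := by
  unfold Gbar
  rw [show pd (fun y => S.g y l k) i x = pd (fun y => S.g y k l) i x from pdg_symm hx i l k]
  ring

lemma tf' (hx : x ∈ S.U) (k l : Fin n) :
    pd (fun y => low S.g S.u y l) k x
      = S.φ x * (S.g x k l + low S.g S.u x k * low S.g S.u x l)
        + ∑ m, Chr S.g S.ginv m k l x * low S.g S.u x m := by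
  have h := S.htf x hx k l
  unfold covdCo at h
  linarith

lemma pdw_symm (hx : x ∈ S.U) (k l : Fin n) :
    pd (fun y => low S.g S.u y l) k x = pd (fun y => low S.g S.u y k) l x := by
  rw [tf' hx k l, tf' hx l k, S.hg_symm x hx k l]
  rw [Finset.sum_congr rfl fun m _ => by rw [chr_symm hx m k l]]
  ring

lemma sum_u_low (hx : x ∈ S.U) : ∑ k, S.u x k * low S.g S.u x k = -1 := by
  rw [← S.hu_unit x hx]
  unfold low
  apply Finset.sum_congr rfl
  intro k _
  rw [Finset.mul_sum]
  exact Finset.sum_congr rfl fun j _ => by ring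

lemma sum_ginv_low (hx : x ∈ S.U) (q : Fin n) :
    ∑ j, S.ginv x q j * low S.g S.u x j = S.u x q := by
  unfold low
  have h : ∀ j, S.ginv x q j * ∑ a, S.g x j a * S.u x a
      = ∑ a, (S.ginv x q j * S.g x j a) * S.u x a := by
    intro j; rw [Finset.mul_sum]; exact Finset.sum_congr rfl fun a _ => by ring
  rw [Finset.sum_congr rfl fun j _ => h j, Finset.sum_comm]
  have h2 : ∀ a, ∑ j, (S.ginv x q j * S.g x j a) * S.u x a
      = (if q = a then 1 else 0) * S.u x a := by
    intro a; rw [← sum_ginv_g hx q a, Finset.sum_mul]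
  rw [Finset.sum_congr rfl fun a _ => h2 a]
  simp

end Setting

namespace Setting
variable {S : Setting n} {x : Pt n}

lemma deriv_tf (hx : x ∈ S.U) (k j l : Fin n) :
    pd (fun y => pd (fun z => low S.g S.u z l) j y) k x
      = pd S.φ k x * (S.g x j l + low S.g S.u x j * low S.g S.u x l)
        + S.φ x * (pd (fun y => S.g y j l) k x
            + pd (fun y => low S.g S.u y j) k x * low S.g S.u x l
            + low S.g S.u x j * pd (fun y => low S.g S.u y l) k x)
        + (∑ m, Chr S.g S.ginv m j l x * pd (fun y => low S.g S.u y m) k x)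
        + (∑ m, low S.g S.u x m * pd (fun y => Chr S.g S.ginv m j l y) k x) := by
  have dφ : DifferentiableAt ℝ S.φ x := diffAt S.hU S.hφ_smooth hx
  have dg : ∀ a b : Fin n, DifferentiableAt ℝ (fun y => S.g y a b) x :=
    fun a b => diffAt S.hU (S.hg_smooth a b) hx
  have dw : ∀ a : Fin n, DifferentiableAt ℝ (fun y => low S.g S.u y a) x :=
    fun a => diffAt S.hU (S.sm_low a) hx
  have dc : ∀ m a b : Fin n, DifferentiableAt ℝ (fun y => Chr S.g S.ginv m a b y) x :=
    fun m a b => diffAt S.hU (S.sm_chr m a b) hx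
  have e1 : pd (fun y => pd (fun z => low S.g S.u z l) j y) k x
      = pd (fun y => S.φ y * (S.g y j l + low S.g S.u y j * low S.g S.u y l)
          + ∑ m, Chr S.g S.ginv m j l y * low S.g S.u y m) k x :=
    pd_congr S.hU hx (fun y hy => tf' hy j l) k
  rw [e1]
  rw [pd_add (dφ.fun_mul ((dg j l).fun_add ((dw j).fun_mul (dw l))))
    (DifferentiableAt.fun_sum fun m _ => (dc m j l).fun_mul (dw m))]
  rw [pd_mul dφ ((dg j l).fun_add ((dw j).fun_mul (dw l)))]
  rw [pd_add (dg j l) ((dw j).fun_mul (dw l))]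
  rw [pd_mul (dw j) (dw l)]
  rw [pd_sum (fun m => (dc m j l).fun_mul (dw m))]
  rw [Finset.sum_congr rfl fun m _ => pd_mul (dc m j l) (dw m) k]
  rw [Finset.sum_add_distrib]
  ring

lemma riem_u (hx : x ∈ S.U) (j k l : Fin n) :
    ∑ m, Riem S.g S.ginv j k l m x * low S.g S.u x m
      = pd S.φ j x * (S.g x k l + low S.g S.u x k * low S.g S.u x l)
        - pd S.φ k x * (S.g x j l + low S.g S.u x j * low S.g S.u x l)
        + S.φ x ^ 2 * (low S.g S.u x k * (S.g x j l + low S.g S.u x j * low S.g S.u x l)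
            - low S.g S.u x j * (S.g x k l + low S.g S.u x k * low S.g S.u x l)) := by
  have Ekj := deriv_tf hx k j l
  have Ejk := deriv_tf hx j k l
  have Esym : pd (fun y => pd (fun z => low S.g S.u z l) j y) k x
      = pd (fun y => pd (fun z => low S.g S.u z l) k y) j x :=
    pd_comm S.hU (S.sm_low l) hx k j
  have E0 := Ekj.symm.trans (Esym.trans Ejk)
  have H2 : ∑ m, Riem S.g S.ginv j k l m x * low S.g S.u x m
      = (∑ m, low S.g S.u x m * pd (fun y => Chr S.g S.ginv m j l y) k x)
        - (∑ m, low S.g S.u x m * pd (fun y => Chr S.g S.ginv m k l y) j x)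
        + (∑ m, ∑ a, Chr S.g S.ginv a j l x * Chr S.g S.ginv m k a x * low S.g S.u x m)
        - (∑ m, ∑ a, Chr S.g S.ginv a k l x * Chr S.g S.ginv m j a x * low S.g S.u x m) := by
    rw [← Finset.sum_sub_distrib, ← Finset.sum_add_distrib, ← Finset.sum_sub_distrib]
    apply Finset.sum_congr rfl
    intro m _
    simp only [Riem]
    rw [sub_mul, add_mul, sub_mul, Finset.sum_mul, Finset.sum_mul]
    ring
  have HP1 : ∑ m, Chr S.g S.ginv m j l x * pd (fun y => low S.g S.u y m) k x
      = S.φ x * (∑ m, Chr S.g S.ginv m j l x * S.g x k m)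
        + S.φ x * low S.g S.u x k * (∑ m, Chr S.g S.ginv m j l x * low S.g S.u x m)
        + ∑ m, ∑ a, Chr S.g S.ginv m j l x * (Chr S.g S.ginv a k m x * low S.g S.u x a) := by
    rw [Finset.mul_sum, Finset.mul_sum, ← Finset.sum_add_distrib, ← Finset.sum_add_distrib]
    apply Finset.sum_congr rfl
    intro m _
    rw [tf' hx k m, mul_add, Finset.mul_sum]
    ring
  have HP2 : ∑ m, Chr S.g S.ginv m k l x * pd (fun y => low S.g S.u y m) j x
      = S.φ x * (∑ m, Chr S.g S.ginv m k l x * S.g x j m)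
        + S.φ x * low S.g S.u x j * (∑ m, Chr S.g S.ginv m k l x * low S.g S.u x m)
        + ∑ m, ∑ a, Chr S.g S.ginv m k l x * (Chr S.g S.ginv a j m x * low S.g S.u x a) := by
    rw [Finset.mul_sum, Finset.mul_sum, ← Finset.sum_add_distrib, ← Finset.sum_add_distrib]
    apply Finset.sum_congr rfl
    intro m _
    rw [tf' hx j m, mul_add, Finset.mul_sum]
    ring
  have HR1 : ∑ m, ∑ a, Chr S.g S.ginv m j l x * (Chr S.g S.ginv a k m x * low S.g S.u x a)
      = ∑ m, ∑ a, Chr S.g S.ginv a j l x * Chr S.g S.ginv m k a x * low S.g S.u x m := by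
    rw [Finset.sum_comm]
    exact Finset.sum_congr rfl fun m _ => Finset.sum_congr rfl fun a _ => by ring
  have HR2 : ∑ m, ∑ a, Chr S.g S.ginv m k l x * (Chr S.g S.ginv a j m x * low S.g S.u x a)
      = ∑ m, ∑ a, Chr S.g S.ginv a k l x * Chr S.g S.ginv m j a x * low S.g S.u x m := by
    rw [Finset.sum_comm]
    exact Finset.sum_congr rfl fun m _ => Finset.sum_congr rfl fun a _ => by ring
  have HdGk : pd (fun y => S.g y j l) k x
      = (∑ p, Chr S.g S.ginv p k j x * S.g x p l) + ∑ p, Chr S.g S.ginv p k l x * S.g x p j := by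
    rw [dg_eq hx k j l, ← chr_low hx k j l, ← chr_low hx k l j]
  have HdGj : pd (fun y => S.g y k l) j x
      = (∑ p, Chr S.g S.ginv p j k x * S.g x p l) + ∑ p, Chr S.g S.ginv p j l x * S.g x p k := by
    rw [dg_eq hx j k l, ← chr_low hx j k l, ← chr_low hx j l k]
  have HSG13 : ∑ p, Chr S.g S.ginv p k j x * S.g x p l
      = ∑ p, Chr S.g S.ginv p j k x * S.g x p l :=
    Finset.sum_congr rfl fun p _ => by rw [chr_symm hx p k j]
  have HSA12 : ∑ m, Chr S.g S.ginv m k j x * low S.g S.u x m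
      = ∑ m, Chr S.g S.ginv m j k x * low S.g S.u x m :=
    Finset.sum_congr rfl fun m _ => by rw [chr_symm hx m k j]
  have HSC1 : ∑ m, Chr S.g S.ginv m j l x * S.g x k m
      = ∑ p, Chr S.g S.ginv p j l x * S.g x p k :=
    Finset.sum_congr rfl fun m _ => by rw [S.hg_symm x hx k m]
  have HSC2 : ∑ m, Chr S.g S.ginv m k l x * S.g x j m
      = ∑ p, Chr S.g S.ginv p k l x * S.g x p j :=
    Finset.sum_congr rfl fun m _ => by rw [S.hg_symm x hx j m]
  have Htfjk := tf' hx j k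
  have Htfkj := tf' hx k j
  have Htfjl := tf' hx j l
  have Htfkl := tf' hx k l
  have HGjk : S.g x j k = S.g x k j := S.hg_symm x hx j k
  rw [H2]
  linear_combination E0 + S.φ x * HdGj - S.φ x * HdGk
    + S.φ x * low S.g S.u x l * Htfjk - S.φ x * low S.g S.u x l * Htfkj
    + S.φ x * low S.g S.u x k * Htfjl - S.φ x * low S.g S.u x j * Htfkl
    + HP2 - HP1 - HR1 + HR2 - S.φ x * HSG13 - S.φ x * HSC1 + S.φ x * HSC2
    + S.φ x ^ 2 * low S.g S.u x l * HGjk - S.φ x * low S.g S.u x l * HSA12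

end Setting

namespace Setting
variable {S : Setting n} {x : Pt n}

lemma pd_gbar (hx : x ∈ S.U) (k j l m : Fin n) :
    pd (fun y => S.Gbar j l m y) k x
      = (1/2) * (pd (fun y => pd (fun z => S.g z l m) j y) k x
          + pd (fun y => pd (fun z => S.g z j m) l y) k x
          - pd (fun y => pd (fun z => S.g z j l) m y) k x) := by
  have dA : DifferentiableAt ℝ (fun y => pd (fun z => S.g z l m) j y) x :=
    diffAt S.hU (S.sm_pdg l m j) hx
  have dB : DifferentiableAt ℝ (fun y => pd (fun z => S.g z j m) l y) x :=
    diffAt S.hU (S.sm_pdg j m l) hx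
  have dC : DifferentiableAt ℝ (fun y => pd (fun z => S.g z j l) m y) x :=
    diffAt S.hU (S.sm_pdg j l m) hx
  show pd (fun y => (1/2) * (pd (fun z => S.g z l m) j y
      + pd (fun z => S.g z j m) l y - pd (fun z => S.g z j l) m y)) k x = _
  rw [pd_const_mul ((dA.fun_add dB).fun_sub dC), pd_sub (dA.fun_add dB) dC, pd_add dA dB]

lemma leib (hx : x ∈ S.U) (k j l m : Fin n) :
    ∑ p, S.g x p m * pd (fun y => Chr S.g S.ginv p j l y) k x
      = pd (fun y => S.Gbar j l m y) k x
        - ∑ p, Chr S.g S.ginv p j l x * pd (fun y => S.g y p m) k x := by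
  have dg : ∀ a b : Fin n, DifferentiableAt ℝ (fun y => S.g y a b) x :=
    fun a b => diffAt S.hU (S.hg_smooth a b) hx
  have dc : ∀ p a b : Fin n, DifferentiableAt ℝ (fun y => Chr S.g S.ginv p a b y) x :=
    fun p a b => diffAt S.hU (S.sm_chr p a b) hx
  have hfun : pd (fun y => ∑ p, Chr S.g S.ginv p j l y * S.g y p m) k x
      = pd (fun y => S.Gbar j l m y) k x :=
    pd_congr S.hU hx (fun y hy => chr_low hy j l m) k
  rw [pd_sum (fun p => (dc p j l).fun_mul (dg p m))] at hfun
  rw [Finset.sum_congr rfl fun p _ => pd_mul (dc p j l) (dg p m) k] at hfun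
  rw [Finset.sum_add_distrib] at hfun
  linear_combination hfun

lemma riem_g_expand (hx : x ∈ S.U) (j k l m : Fin n) :
    ∑ p, Riem S.g S.ginv j k l p x * S.g x p m
      = (∑ p, S.g x p m * pd (fun y => Chr S.g S.ginv p j l y) k x)
        - (∑ p, S.g x p m * pd (fun y => Chr S.g S.ginv p k l y) j x)
        + (∑ p, ∑ a, Chr S.g S.ginv a j l x * Chr S.g S.ginv p k a x * S.g x p m)
        - (∑ p, ∑ a, Chr S.g S.ginv a k l x * Chr S.g S.ginv p j a x * S.g x p m) := by
  rw [← Finset.sum_sub_distrib, ← Finset.sum_add_distrib, ← Finset.sum_sub_distrib]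
  apply Finset.sum_congr rfl
  intro p _
  simp only [Riem]
  rw [sub_mul, add_mul, sub_mul, Finset.sum_mul, Finset.sum_mul]
  ring

lemma chr_dg_expand (hx : x ∈ S.U) (j l k m : Fin n) :
    ∑ p, Chr S.g S.ginv p j l x * pd (fun y => S.g y p m) k x
      = (∑ p, ∑ q, Chr S.g S.ginv p j l x * (Chr S.g S.ginv q k p x * S.g x q m))
        + ∑ p, ∑ q, Chr S.g S.ginv p j l x * (Chr S.g S.ginv q k m x * S.g x q p) := by
  rw [← Finset.sum_add_distrib]
  apply Finset.sum_congr rfl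
  intro p _
  have h : pd (fun y => S.g y p m) k x
      = (∑ q, Chr S.g S.ginv q k p x * S.g x q m) + ∑ q, Chr S.g S.ginv q k m x * S.g x q p := by
    rw [dg_eq hx k p m, ← chr_low hx k p m, ← chr_low hx k m p]
  rw [h, mul_add, Finset.mul_sum, Finset.mul_sum]

lemma relabel1 (j l k m : Fin n) :
    ∑ p, ∑ q, Chr S.g S.ginv p j l x * (Chr S.g S.ginv q k p x * S.g x q m)
      = ∑ p, ∑ a, Chr S.g S.ginv a j l x * Chr S.g S.ginv p k a x * S.g x p m := by
  rw [Finset.sum_comm]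
  exact Finset.sum_congr rfl fun p _ => Finset.sum_congr rfl fun a _ => by ring

lemma relabel2 (hx : x ∈ S.U) (j l k m : Fin n) :
    ∑ p, ∑ q, Chr S.g S.ginv p j l x * (Chr S.g S.ginv q k m x * S.g x q p)
      = ∑ p, ∑ q, Chr S.g S.ginv p k m x * (Chr S.g S.ginv q j l x * S.g x q p) := by
  rw [Finset.sum_comm]
  refine Finset.sum_congr rfl fun p _ => Finset.sum_congr rfl fun q _ => ?_
  rw [S.hg_symm x hx q p]
  ring

lemma d2_symm (hx : x ∈ S.U) (k j l m : Fin n) :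
    pd (fun y => pd (fun z => S.g z m l) j y) k x
      = pd (fun y => pd (fun z => S.g z l m) j y) k x :=
  pd_congr S.hU hx (fun y hy => pdg_symm hy j m l) k

lemma riem_antisymm (hx : x ∈ S.U) (j k l m : Fin n) :
    ∑ p, Riem S.g S.ginv j k l p x * S.g x p m
      = - ∑ p, Riem S.g S.ginv j k m p x * S.g x p l := by
  have Hexp1 := riem_g_expand hx j k l m
  have Hexp2 := riem_g_expand hx j k m l
  have L1 := leib hx k j l m
  have L2 := leib hx j k l m
  have L3 := leib hx k j m l
  have L4 := leib hx j k m l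
  have G1 := pd_gbar hx k j l m
  have G2 := pd_gbar hx j k l m
  have G3 := pd_gbar hx k j m l
  have G4 := pd_gbar hx j k m l
  have E1 := chr_dg_expand hx j l k m
  have E2 := chr_dg_expand hx k l j m
  have E3 := chr_dg_expand hx j m k l
  have E4 := chr_dg_expand hx k m j l
  have R1 := relabel1 (S := S) (x := x) j l k m
  have R2 := relabel1 (S := S) (x := x) k l j m
  have R3 := relabel1 (S := S) (x := x) j m k l
  have R4 := relabel1 (S := S) (x := x) k m j l
  have R5 := relabel2 hx j l k m
  have R6 := relabel2 hx j m k l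
  have D1 := d2_symm hx k j l m
  have D2 := d2_symm hx j k l m
  have D3 := d2_symm hx k l j m
  have D4 := d2_symm hx j l k m
  have D5 := d2_symm hx k m j l
  have D6 := d2_symm hx j m k l
  have C1 : pd (fun y => pd (fun z => S.g z l m) j y) k x
      = pd (fun y => pd (fun z => S.g z l m) k y) j x :=
    pd_comm S.hU (S.hg_smooth l m) hx k j
  have C2 : pd (fun y => pd (fun z => S.g z j m) l y) k x
      = pd (fun y => pd (fun z => S.g z j m) k y) l x :=
    pd_comm S.hU (S.hg_smooth j m) hx k l
  have C3 : pd (fun y => pd (fun z => S.g z j l) m y) k x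
      = pd (fun y => pd (fun z => S.g z j l) k y) m x :=
    pd_comm S.hU (S.hg_smooth j l) hx k m
  rw [Hexp1, Hexp2, L1, L2, L3, L4, G1, G2, G3, G4, E1, E2, E3, E4]
  have Da := d2_symm hx k l j m
  rw [R1, R2, R3, R4, R5, R6]
  linear_combination (1/2 : ℝ) * (D1 - D2 + D3 - Da) + C1

end Setting

namespace Setting
variable {S : Setting n} {x : Pt n}

lemma sum_ginv_low' (hx : x ∈ S.U) (q : Fin n) :
    ∑ p, S.ginv x p q * low S.g S.u x p = S.u x q := by
  rw [Finset.sum_congr rfl fun p _ => by rw [ginv_symm hx p q]]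
  exact sum_ginv_low hx q

lemma sum_low_u (hx : x ∈ S.U) : ∑ k, low S.g S.u x k * S.u x k = -1 := by
  rw [Finset.sum_congr rfl fun k _ => mul_comm (low S.g S.u x k) (S.u x k)]
  exact sum_u_low hx

lemma raise_riem (hx : x ∈ S.U) (j k l : Fin n) :
    Riem S.g S.ginv j k l j x
      = ∑ q, (∑ p, Riem S.g S.ginv j k l p x * S.g x p q) * S.ginv x q j := by
  have t : ∑ q, (∑ p, Riem S.g S.ginv j k l p x * S.g x p q) * S.ginv x q j
      = ∑ p, Riem S.g S.ginv j k l p x * (if p = j then 1 else 0) := by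
    calc ∑ q, (∑ p, Riem S.g S.ginv j k l p x * S.g x p q) * S.ginv x q j
        = ∑ q, ∑ p, Riem S.g S.ginv j k l p x * (S.g x p q * S.ginv x q j) := by
          refine Finset.sum_congr rfl fun q _ => ?_
          rw [Finset.sum_mul]
          exact Finset.sum_congr rfl fun p _ => by ring
      _ = ∑ p, ∑ q, Riem S.g S.ginv j k l p x * (S.g x p q * S.ginv x q j) :=
          Finset.sum_comm
      _ = ∑ p, Riem S.g S.ginv j k l p x * (∑ q, S.g x p q * S.ginv x q j) := by
          exact Finset.sum_congr rfl fun p _ => by rw [Finset.mul_sum]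
      _ = ∑ p, Riem S.g S.ginv j k l p x * (if p = j then 1 else 0) := by
          exact Finset.sum_congr rfl fun p _ => by rw [sum_g_ginv hx p j]
  rw [t]
  simp

lemma sum_riemlow_u (j k q : Fin n) :
    ∑ l, (∑ p, Riem S.g S.ginv j k q p x * S.g x p l) * S.u x l
      = ∑ p, Riem S.g S.ginv j k q p x * low S.g S.u x p := by
  calc ∑ l, (∑ p, Riem S.g S.ginv j k q p x * S.g x p l) * S.u x l
      = ∑ l, ∑ p, Riem S.g S.ginv j k q p x * (S.g x p l * S.u x l) := by
        refine Finset.sum_congr rfl fun l _ => ?_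
        rw [Finset.sum_mul]
        exact Finset.sum_congr rfl fun p _ => by ring
    _ = ∑ p, ∑ l, Riem S.g S.ginv j k q p x * (S.g x p l * S.u x l) := Finset.sum_comm
    _ = ∑ p, Riem S.g S.ginv j k q p x * (∑ l, S.g x p l * S.u x l) := by
        exact Finset.sum_congr rfl fun p _ => by rw [Finset.mul_sum]
    _ = ∑ p, Riem S.g S.ginv j k q p x * low S.g S.u x p := rfl

lemma ric_contract (hx : x ∈ S.U) (k : Fin n) :
    ∑ l, RicT S.g S.ginv k l x * S.u x l
      = -(∑ j, ∑ q, S.ginv x q j * (∑ p, Riem S.g S.ginv j k q p x * low S.g S.u x p)) := by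
  have step2 : ∀ l j : Fin n, Riem S.g S.ginv j k l j x * S.u x l
      = -(∑ q, (∑ p, Riem S.g S.ginv j k q p x * S.g x p l) * (S.ginv x q j * S.u x l)) := by
    intro l j
    rw [raise_riem hx j k l, Finset.sum_mul]
    have h : ∀ q : Fin n, ((∑ p, Riem S.g S.ginv j k l p x * S.g x p q) * S.ginv x q j) * S.u x l
        = -((∑ p, Riem S.g S.ginv j k q p x * S.g x p l) * (S.ginv x q j * S.u x l)) := by
      intro q
      rw [riem_antisymm hx j k l q]
      ring
    rw [Finset.sum_congr rfl fun q _ => h q, Finset.sum_neg_distrib]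
  calc ∑ l, RicT S.g S.ginv k l x * S.u x l
      = ∑ l, ∑ j, Riem S.g S.ginv j k l j x * S.u x l := by
        refine Finset.sum_congr rfl fun l _ => ?_
        simp only [RicT]
        rw [Finset.sum_mul]
    _ = ∑ l, ∑ j, -(∑ q, (∑ p, Riem S.g S.ginv j k q p x * S.g x p l)
          * (S.ginv x q j * S.u x l)) :=
        Finset.sum_congr rfl fun l _ => Finset.sum_congr rfl fun j _ => step2 l j
    _ = -(∑ l, ∑ j, ∑ q, (∑ p, Riem S.g S.ginv j k q p x * S.g x p l)
          * (S.ginv x q j * S.u x l)) := by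
        simp only [Finset.sum_neg_distrib]
    _ = -(∑ j, ∑ l, ∑ q, (∑ p, Riem S.g S.ginv j k q p x * S.g x p l)
          * (S.ginv x q j * S.u x l)) := by rw [Finset.sum_comm]
    _ = -(∑ j, ∑ q, ∑ l, (∑ p, Riem S.g S.ginv j k q p x * S.g x p l)
          * (S.ginv x q j * S.u x l)) := by
        exact congrArg Neg.neg (Finset.sum_congr rfl fun j _ => Finset.sum_comm)
    _ = -(∑ j, ∑ q, S.ginv x q j * (∑ l, (∑ p, Riem S.g S.ginv j k q p x * S.g x p l)
          * S.u x l)) := by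
        refine congrArg Neg.neg (Finset.sum_congr rfl fun j _ => Finset.sum_congr rfl fun q _ => ?_)
        rw [Finset.mul_sum]
        exact Finset.sum_congr rfl fun l _ => by ring
    _ = -(∑ j, ∑ q, S.ginv x q j * (∑ p, Riem S.g S.ginv j k q p x * low S.g S.u x p)) := by
        exact congrArg Neg.neg (Finset.sum_congr rfl fun j _ => Finset.sum_congr rfl fun q _ =>
          by rw [sum_riemlow_u])

end Setting

namespace Setting
variable {S : Setting n} {x : Pt n}

lemma inner_eval (hx : x ∈ S.U) (k : Fin n) :
    ∑ j, ∑ q, S.ginv x q j *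
        (pd S.φ j x * (S.g x k q + low S.g S.u x k * low S.g S.u x q)
          - pd S.φ k x * (S.g x j q + low S.g S.u x j * low S.g S.u x q)
          + S.φ x ^ 2 * (low S.g S.u x k * (S.g x j q + low S.g S.u x j * low S.g S.u x q)
              - low S.g S.u x j * (S.g x k q + low S.g S.u x k * low S.g S.u x q)))
      = (2 - (n : ℝ)) * pd S.φ k x + udot S.u S.φ x * low S.g S.u x k
        + ((n : ℝ) - 1) * S.φ x ^ 2 * low S.g S.u x k := by
  have hσ1 : ∀ j : Fin n, ∑ q, S.ginv x q j * S.g x k q = (if k = j then 1 else 0) := by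
    intro j
    rw [← sum_g_ginv hx k j]
    exact Finset.sum_congr rfl fun q _ => by ring
  have hσ2 : ∀ j : Fin n, ∑ q, S.ginv x q j * low S.g S.u x q = S.u x j :=
    fun j => sum_ginv_low' hx j
  have hσ3 : ∀ j : Fin n, ∑ q, S.ginv x q j * S.g x j q = 1 := by
    intro j
    have h := sum_g_ginv hx j j
    rw [if_pos rfl] at h
    rw [← h]
    exact Finset.sum_congr rfl fun q _ => by ring
  have hq : ∀ j : Fin n, ∑ q, S.ginv x q j *
      (pd S.φ j x * (S.g x k q + low S.g S.u x k * low S.g S.u x q)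
        - pd S.φ k x * (S.g x j q + low S.g S.u x j * low S.g S.u x q)
        + S.φ x ^ 2 * (low S.g S.u x k * (S.g x j q + low S.g S.u x j * low S.g S.u x q)
            - low S.g S.u x j * (S.g x k q + low S.g S.u x k * low S.g S.u x q)))
      = pd S.φ j x * (if k = j then 1 else 0)
        + pd S.φ j x * low S.g S.u x k * S.u x j
        - pd S.φ k x
        - pd S.φ k x * low S.g S.u x j * S.u x j
        + S.φ x ^ 2 * low S.g S.u x k
        + S.φ x ^ 2 * low S.g S.u x k * low S.g S.u x j * S.u x j
        - S.φ x ^ 2 * low S.g S.u x j * (if k = j then 1 else 0)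
        - S.φ x ^ 2 * low S.g S.u x j * low S.g S.u x k * S.u x j := by
    intro j
    have expand : ∑ q, S.ginv x q j *
        (pd S.φ j x * (S.g x k q + low S.g S.u x k * low S.g S.u x q)
          - pd S.φ k x * (S.g x j q + low S.g S.u x j * low S.g S.u x q)
          + S.φ x ^ 2 * (low S.g S.u x k * (S.g x j q + low S.g S.u x j * low S.g S.u x q)
              - low S.g S.u x j * (S.g x k q + low S.g S.u x k * low S.g S.u x q)))
        = pd S.φ j x * (∑ q, S.ginv x q j * S.g x k q)
          + pd S.φ j x * low S.g S.u x k * (∑ q, S.ginv x q j * low S.g S.u x q)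
          - pd S.φ k x * (∑ q, S.ginv x q j * S.g x j q)
          - pd S.φ k x * low S.g S.u x j * (∑ q, S.ginv x q j * low S.g S.u x q)
          + S.φ x ^ 2 * low S.g S.u x k * (∑ q, S.ginv x q j * S.g x j q)
          + S.φ x ^ 2 * low S.g S.u x k * low S.g S.u x j * (∑ q, S.ginv x q j * low S.g S.u x q)
          - S.φ x ^ 2 * low S.g S.u x j * (∑ q, S.ginv x q j * S.g x k q)
          - S.φ x ^ 2 * low S.g S.u x j * low S.g S.u x k * (∑ q, S.ginv x q j * low S.g S.u x q) := by
      simp only [Finset.mul_sum, ← Finset.sum_sub_distrib, ← Finset.sum_add_distrib]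
      exact Finset.sum_congr rfl fun q _ => by ring
    rw [expand, hσ1 j, hσ2 j, hσ3 j]
    ring
  rw [Finset.sum_congr rfl fun j _ => hq j]
  simp only [Finset.sum_add_distrib, Finset.sum_sub_distrib]
  have o1 : ∑ j, pd S.φ j x * (if k = j then 1 else 0) = pd S.φ k x := by simp
  have o2 : ∑ j, pd S.φ j x * low S.g S.u x k * S.u x j
      = low S.g S.u x k * udot S.u S.φ x := by
    unfold udot
    rw [Finset.mul_sum]
    exact Finset.sum_congr rfl fun j _ => by ring
  have o3 : ∑ _j : Fin n, pd S.φ k x = (n : ℝ) * pd S.φ k x := by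
    rw [Finset.sum_const, Finset.card_univ, Fintype.card_fin, nsmul_eq_mul]
  have o4 : ∑ j, pd S.φ k x * low S.g S.u x j * S.u x j = -pd S.φ k x := by
    have h : ∑ j, pd S.φ k x * low S.g S.u x j * S.u x j
        = pd S.φ k x * ∑ j, low S.g S.u x j * S.u x j := by
      rw [Finset.mul_sum]
      exact Finset.sum_congr rfl fun j _ => by ring
    rw [h, sum_low_u hx]
    ring
  have o5 : ∑ _j : Fin n, S.φ x ^ 2 * low S.g S.u x k
      = (n : ℝ) * (S.φ x ^ 2 * low S.g S.u x k) := by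
    rw [Finset.sum_const, Finset.card_univ, Fintype.card_fin, nsmul_eq_mul]
  have o6 : ∑ j, S.φ x ^ 2 * low S.g S.u x k * low S.g S.u x j * S.u x j
      = -(S.φ x ^ 2 * low S.g S.u x k) := by
    have h : ∑ j, S.φ x ^ 2 * low S.g S.u x k * low S.g S.u x j * S.u x j
        = S.φ x ^ 2 * low S.g S.u x k * ∑ j, low S.g S.u x j * S.u x j := by
      rw [Finset.mul_sum]
      exact Finset.sum_congr rfl fun j _ => by ring
    rw [h, sum_low_u hx]
    ring
  have o7 : ∑ j, S.φ x ^ 2 * low S.g S.u x j * (if k = j then 1 else 0)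
      = S.φ x ^ 2 * low S.g S.u x k := by simp
  have o8 : ∑ j, S.φ x ^ 2 * low S.g S.u x j * low S.g S.u x k * S.u x j
      = -(S.φ x ^ 2 * low S.g S.u x k) := by
    have h : ∑ j, S.φ x ^ 2 * low S.g S.u x j * low S.g S.u x k * S.u x j
        = S.φ x ^ 2 * low S.g S.u x k * ∑ j, low S.g S.u x j * S.u x j := by
      rw [Finset.mul_sum]
      exact Finset.sum_congr rfl fun j _ => by ring
    rw [h, sum_low_u hx]
    ring
  rw [o1, o2, o3, o4, o5, o6, o7, o8]
  ring

lemma eig_expand (hx : x ∈ S.U) (k : Fin n) :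
    S.ξ x * low S.g S.u x k
      = ((n : ℝ) - 2) * pd S.φ k x - udot S.u S.φ x * low S.g S.u x k
        - ((n : ℝ) - 1) * S.φ x ^ 2 * low S.g S.u x k := by
  have h0 := (S.heig x hx k).symm
  rw [ric_contract hx k] at h0
  rw [Finset.sum_congr rfl (fun j (_ : j ∈ Finset.univ) => Finset.sum_congr rfl
    fun q _ => by rw [riem_u hx j k q])] at h0
  rw [inner_eval hx k] at h0
  rw [h0]
  ring

end Setting

namespace Setting
variable {S : Setting n} {x : Pt n}

lemma sm_udot : ContDiffOn ℝ (⊤ : ℕ∞) (fun y => udot S.u S.φ y) S.U := by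
  unfold udot
  exact ContDiffOn.sum fun m _ => (S.hu_smooth m).mul (contDiffOn_pd S.hU S.hφ_smooth m)

lemma hn2 (S : Setting n) : ((n : ℝ) - 2) ≠ 0 := by
  have h : (3 : ℝ) ≤ (n : ℝ) := by exact_mod_cast S.hn
  intro h0
  nlinarith

lemma xi_val (hx : x ∈ S.U) :
    S.ξ x = -((n : ℝ) - 1) * (udot S.u S.φ x + S.φ x * S.φ x) := by
  have hb0 : ∑ k, S.u x k * (S.ξ x * low S.g S.u x k)
      = ∑ k, S.u x k * (((n : ℝ) - 2) * pd S.φ k x - udot S.u S.φ x * low S.g S.u x k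
          - ((n : ℝ) - 1) * S.φ x ^ 2 * low S.g S.u x k) :=
    Finset.sum_congr rfl fun k _ => by rw [eig_expand hx k]
  have hL : ∑ k, S.u x k * (S.ξ x * low S.g S.u x k) = S.ξ x * (-1 : ℝ) := by
    have h : ∑ k, S.u x k * (S.ξ x * low S.g S.u x k)
        = S.ξ x * ∑ k, S.u x k * low S.g S.u x k := by
      rw [Finset.mul_sum]
      exact Finset.sum_congr rfl fun k _ => by ring
    rw [h, sum_u_low hx]
  have hR : ∑ k, S.u x k * (((n : ℝ) - 2) * pd S.φ k x - udot S.u S.φ x * low S.g S.u x k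
        - ((n : ℝ) - 1) * S.φ x ^ 2 * low S.g S.u x k)
      = ((n : ℝ) - 2) * udot S.u S.φ x
        - udot S.u S.φ x * (-1) - ((n : ℝ) - 1) * S.φ x ^ 2 * (-1) := by
    have h : ∀ k : Fin n, S.u x k * (((n : ℝ) - 2) * pd S.φ k x
          - udot S.u S.φ x * low S.g S.u x k
          - ((n : ℝ) - 1) * S.φ x ^ 2 * low S.g S.u x k)
        = ((n : ℝ) - 2) * (S.u x k * pd S.φ k x)
          - udot S.u S.φ x * (S.u x k * low S.g S.u x k)
          - ((n : ℝ) - 1) * S.φ x ^ 2 * (S.u x k * low S.g S.u x k) := fun k => by ring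
    rw [Finset.sum_congr rfl fun k _ => h k]
    simp only [Finset.sum_sub_distrib, ← Finset.mul_sum]
    rw [sum_u_low hx]
    rfl
  have hfin := hL.symm.trans (hb0.trans hR)
  nlinarith [hfin]

lemma phi_grad (hx : x ∈ S.U) (k : Fin n) :
    pd S.φ k x = -(udot S.u S.φ x * low S.g S.u x k) := by
  have h := eig_expand hx k
  rw [xi_val hx] at h
  have h2 : ((n : ℝ) - 2) * pd S.φ k x
      = ((n : ℝ) - 2) * (-(udot S.u S.φ x * low S.g S.u x k)) := by nlinarith [h]
  exact mul_left_cancel₀ S.hn2 h2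

lemma phidot_grad (hx : x ∈ S.U) (i : Fin n) :
    pd (fun y => udot S.u S.φ y) i x
      = -(udot S.u (fun y => udot S.u S.φ y) x * low S.g S.u x i) := by
  have dΦ : DifferentiableAt ℝ (fun y => udot S.u S.φ y) x := diffAt S.hU sm_udot hx
  have dw : ∀ a : Fin n, DifferentiableAt ℝ (fun y => low S.g S.u y a) x :=
    fun a => diffAt S.hU (S.sm_low a) hx
  have key : ∀ i k : Fin n,
      udot S.u S.φ x * pd (fun y => low S.g S.u y k) i x
          + low S.g S.u x k * pd (fun y => udot S.u S.φ y) i x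
        = udot S.u S.φ x * pd (fun y => low S.g S.u y i) k x
          + low S.g S.u x i * pd (fun y => udot S.u S.φ y) k x := by
    intro i k
    have e1 : pd (fun y => pd S.φ k y) i x
        = pd (fun y => -(udot S.u S.φ y * low S.g S.u y k)) i x :=
      pd_congr S.hU hx (fun y hy => phi_grad hy k) i
    have e2 : pd (fun y => pd S.φ i y) k x
        = pd (fun y => -(udot S.u S.φ y * low S.g S.u y i)) k x :=
      pd_congr S.hU hx (fun y hy => phi_grad hy i) k
    have esym : pd (fun y => pd S.φ k y) i x = pd (fun y => pd S.φ i y) k x :=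
      pd_comm S.hU S.hφ_smooth hx i k
    have n1 : pd (fun y => -(udot S.u S.φ y * low S.g S.u y k)) i x
        = -(udot S.u S.φ x * pd (fun y => low S.g S.u y k) i x
            + low S.g S.u x k * pd (fun y => udot S.u S.φ y) i x) := by
      have := pd_mul (f := fun y => udot S.u S.φ y) (h := fun y => low S.g S.u y k)
        dΦ (dw k) i
      have hneg : pd (fun y => -(udot S.u S.φ y * low S.g S.u y k)) i x
          = -(pd (fun y => udot S.u S.φ y * low S.g S.u y k) i x) := by
        unfold pd
        rw [fderiv_fun_neg]
        simp
      rw [hneg, this]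
    have n2 : pd (fun y => -(udot S.u S.φ y * low S.g S.u y i)) k x
        = -(udot S.u S.φ x * pd (fun y => low S.g S.u y i) k x
            + low S.g S.u x i * pd (fun y => udot S.u S.φ y) k x) := by
      have := pd_mul (f := fun y => udot S.u S.φ y) (h := fun y => low S.g S.u y i)
        dΦ (dw i) k
      have hneg : pd (fun y => -(udot S.u S.φ y * low S.g S.u y i)) k x
          = -(pd (fun y => udot S.u S.φ y * low S.g S.u y i) k x) := by
        unfold pd
        rw [fderiv_fun_neg]
        simp
      rw [hneg, this]
    have := e1.symm.trans (esym.trans e2)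
    rw [n1, n2] at this
    linarith [this]
  have key2 : ∀ k : Fin n, low S.g S.u x k * pd (fun y => udot S.u S.φ y) i x
      = low S.g S.u x i * pd (fun y => udot S.u S.φ y) k x := by
    intro k
    have h := key i k
    rw [pdw_symm hx i k] at h
    linarith [h]
  have hc : ∑ k, S.u x k * (low S.g S.u x k * pd (fun y => udot S.u S.φ y) i x)
      = ∑ k, S.u x k * (low S.g S.u x i * pd (fun y => udot S.u S.φ y) k x) :=
    Finset.sum_congr rfl fun k _ => by rw [key2 k]
  have hcl : ∑ k, S.u x k * (low S.g S.u x k * pd (fun y => udot S.u S.φ y) i x)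
      = -(pd (fun y => udot S.u S.φ y) i x) := by
    have h : ∑ k, S.u x k * (low S.g S.u x k * pd (fun y => udot S.u S.φ y) i x)
        = pd (fun y => udot S.u S.φ y) i x * ∑ k, S.u x k * low S.g S.u x k := by
      rw [Finset.mul_sum]
      exact Finset.sum_congr rfl fun k _ => by ring
    rw [h, sum_u_low hx]
    ring
  have hcr : ∑ k, S.u x k * (low S.g S.u x i * pd (fun y => udot S.u S.φ y) k x)
      = low S.g S.u x i * udot S.u (fun y => udot S.u S.φ y) x := by
    have h : ∑ k, S.u x k * (low S.g S.u x i * pd (fun y => udot S.u S.φ y) k x)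
        = low S.g S.u x i * ∑ k, S.u x k * pd (fun y => udot S.u S.φ y) k x := by
      rw [Finset.mul_sum]
      exact Finset.sum_congr rfl fun k _ => by ring
    rw [h]
    rfl
  rw [hcl, hcr] at hc
  linarith [hc]

lemma pd_xi (hx : x ∈ S.U) (i : Fin n) :
    pd S.ξ i x = ((n : ℝ) - 1) * (udot S.u (fun y => udot S.u S.φ y) x
        + 2 * S.φ x * udot S.u S.φ x) * low S.g S.u x i := by
  have dΦ : DifferentiableAt ℝ (fun y => udot S.u S.φ y) x := diffAt S.hU sm_udot hx
  have dφ : DifferentiableAt ℝ S.φ x := diffAt S.hU S.hφ_smooth hx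
  have e1 : pd S.ξ i x
      = pd (fun y => -((n : ℝ) - 1) * (udot S.u S.φ y + S.φ y * S.φ y)) i x :=
    pd_congr S.hU hx (fun y hy => xi_val hy) i
  rw [e1, pd_const_mul (dΦ.fun_add (dφ.fun_mul dφ)), pd_add dΦ (dφ.fun_mul dφ), pd_mul dφ dφ]
  rw [phidot_grad hx i, phi_grad hx i]
  ring

lemma final (hx : x ∈ S.U) (i : Fin n) :
    pd S.ξ i x + low S.g S.u x i * udot S.u S.ξ x = 0 := by
  have hud : udot S.u S.ξ x
      = -(((n : ℝ) - 1) * (udot S.u (fun y => udot S.u S.φ y) x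
          + 2 * S.φ x * udot S.u S.φ x)) := by
    show ∑ m, S.u x m * pd S.ξ m x = _
    rw [Finset.sum_congr rfl fun m _ => by rw [pd_xi hx m]]
    have h : ∑ m, S.u x m * (((n : ℝ) - 1) * (udot S.u (fun y => udot S.u S.φ y) x
          + 2 * S.φ x * udot S.u S.φ x) * low S.g S.u x m)
        = ((n : ℝ) - 1) * (udot S.u (fun y => udot S.u S.φ y) x
          + 2 * S.φ x * udot S.u S.φ x) * ∑ m, S.u x m * low S.g S.u x m := by
      rw [Finset.mul_sum]
      exact Finset.sum_congr rfl fun m _ => by ring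
    rw [h, sum_u_low hx]
    ring
  rw [pd_xi hx i, hud]
  ring

end Setting
/-- Proposition 4.2, eq. (27): on a GRW space-time `∂_i ξ + u_i ξ̇ = 0`. -/
theorem stmt7
    (n : ℕ) (hn : 3 ≤ n)
    (U : Set (Pt n)) (hU : IsOpen U)
    (g ginv : Pt n → Matrix (Fin n) (Fin n) ℝ)
    (hg_smooth : ∀ i j, ContDiffOn ℝ (⊤ : ℕ∞) (fun x => g x i j) U)
    (hginv_smooth : ∀ i j, ContDiffOn ℝ (⊤ : ℕ∞) (fun x => ginv x i j) U)
    (hg_symm : ∀ x ∈ U, ∀ i j, g x i j = g x j i)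
    (hginv : ∀ x ∈ U, g x * ginv x = 1)
    (u : Pt n → Fin n → ℝ) (hu_smooth : ∀ i, ContDiffOn ℝ (⊤ : ℕ∞) (fun x => u x i) U)
    (hu_unit : ∀ x ∈ U, ∑ i, ∑ j, g x i j * u x i * u x j = -1)
    (φ : Pt n → ℝ) (hφ_smooth : ContDiffOn ℝ (⊤ : ℕ∞) φ U)
    (htf : ∀ x ∈ U, ∀ k l, covdCo g ginv (low g u) k l x
        = φ x * (g x k l + low g u x k * low g u x l))
    (ξ : Pt n → ℝ) (hξ_smooth : ContDiffOn ℝ (⊤ : ℕ∞) ξ U)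
    (heig : ∀ x ∈ U, ∀ k, ∑ l, RicT g ginv k l x * u x l = ξ x * low g u x k)
    :
    ∀ x ∈ U, ∀ i, pd ξ i x + low g u x i * udot u ξ x = 0 := by
  intro x hx i
  exact Setting.final (S := ⟨hn, U, hU, g, ginv, hg_smooth, hginv_smooth, hg_symm, hginv,
    u, hu_smooth, hu_unit, φ, hφ_smooth, htf, ξ, hξ_smooth, heig⟩) hx i
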